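/- Let (γ, ℓ, ℓ⁽²⁾, Y) be coordinate hypersurface data on U with inverse blocks (P, n, n⁽²⁾), derived fields F, U, K, Γ̄, curvature R̄ of Γ̄, and the fields (I)_{bcd}, (II)_{abcd} as defined below. Then the following two identities hold on U: (1) −2(I)_{bcd}P^{bd}n^c − (II)_{abcd}P^{ac}P^{bd} = −P^{bd}R̄^c_{bcd} − P^{bd}n^c(ℓ_aR̄^a_{bcd} + ∇̄_d(ℓ⁽²⁾K_{bc}) − ∇̄_c(ℓ⁽²⁾K_{bd})) − P^{ac}P^{bd}(K_{bc}Y_{da} − K_{bd}Y_{ac}); (2) (I)_{bcd}(n⁽²⁾P^{bd} − n^bn^d) + (II)_{abcd}n^aP^{bd} = (P^{bd} − ℓ⁽²⁾n^bn^d)(∇̄_dK_{bc} − ∇̄_cK_{bd}) + ½(n⁽²⁾P^{bd} − n^bn^d)(K_{bc}∂_dℓ⁽²⁾ − K_{bd}∂_cℓ⁽²⁾) + P^{bd}n^a[K_{bc}(Y_{da} + F_{da}) − K_{bd}(Y_{ca} + F_{ca})] − n^bn^dℓ_aR̄^a_{bcd}. (For embedded data the left-hand sides equal 2G(n,ℓ)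 and −G(n,e_c), the normal–transversal and normal–tangential components of the ambient Einstein tensor; these are the constraint equations for a general hypersurface written with the connection Γ̄.) -/

import Mathlib

/-!
Both identities are pointwise contractions of the Gauss–Codazzi expressions (I) and (II).
Two differential facts enter: the Leibniz rule `∇̄_d(ℓ⁽²⁾K_{bc}) = ℓ⁽²⁾∇̄_dK_{bc} + K_{bc}∂_dℓ⁽²⁾`,
and `∇̄_cℓ_a + ℓ⁽²⁾K_{ca} = Y_{ca} + F_{ca}`, which is the derivative of the inverse relation
`γ_{ab}n^b + n⁽²⁾ℓ_a = 0`. Everything else is linear algebra with the inverse-block relations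
`P^{ac}γ_{cb} = δ^a_b − n^aℓ_b`, `P^{ab}ℓ_b = −ℓ⁽²⁾n^a`, `n^aℓ_a = 1 − n⁽²⁾ℓ⁽²⁾` and
`γ_{ab}n^b = −n⁽²⁾ℓ_a`. In (1) the terms containing the antisymmetric `F` drop out, since they
pair `F` with the symmetric tensors `P` and `PKP`.
-/

open scoped BigOperators

noncomputable section

namespace HypData

variable {m : ℕ}

/-- Scalar field on ℝ^m. -/
abbrev Sc (m : ℕ) := (Fin m → ℝ) → ℝ
/-- One-index field. -/
abbrev Vec (m : ℕ) := (Fin m → ℝ) → Fin m → ℝ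
/-- Two-index field. -/
abbrev Ten (m : ℕ) := (Fin m → ℝ) → Fin m → Fin m → ℝ
/-- Connection coefficients `Γ x c a b = Γ^c_{ab}` (first index upper). -/
abbrev Conn (m : ℕ) := (Fin m → ℝ) → Fin m → Fin m → Fin m → ℝ
/-- Three-index field. -/
abbrev Ten3 (m : ℕ) := (Fin m → ℝ) → Fin m → Fin m → Fin m → ℝ

/-- Partial derivative of `f` in the `a`-th coordinate direction at `x`. -/
def pd (a : Fin m) (f : Sc m) (x : Fin m → ℝ) : ℝ :=
  fderiv ℝ f x (Pi.single a 1)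

/-- Kronecker delta. -/
def kd (a b : Fin m) : ℝ := if a = b then 1 else 0

/-- Equations (EqP1)-(EqP4): `[[P,n],[nᵀ,n2]]` consists of the inverse blocks of
the block matrix `[[γ,ℓ],[ℓᵀ,ℓ2]]`. -/
def InvBlocks (γ : Fin m → Fin m → ℝ) (ℓ : Fin m → ℝ) (ℓ2 : ℝ)
    (P : Fin m → Fin m → ℝ) (n : Fin m → ℝ) (n2 : ℝ) : Prop :=
  (∀ a b, (∑ c, P a c * γ c b) + n a * ℓ b = kd a b) ∧
  (∀ a, (∑ b, P a b * ℓ b) + ℓ2 * n a = 0) ∧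
  ((∑ a, n a * ℓ a) + n2 * ℓ2 = 1) ∧
  (∀ a, (∑ b, γ a b * n b) + n2 * ℓ a = 0)

/-- ∇_a ω_b. -/
def covD1 (Γ : Conn m) (ω : Vec m) (x : Fin m → ℝ) (a b : Fin m) : ℝ :=
  pd a (fun y => ω y b) x - ∑ d, Γ x d a b * ω x d

/-- ∇_a X^b. -/
def covD1U (Γ : Conn m) (X : Vec m) (x : Fin m → ℝ) (a b : Fin m) : ℝ :=
  pd a (fun y => X y b) x + ∑ d, Γ x b a d * X x d

/-- ∇_a T_{bc}. -/
def covD2 (Γ : Conn m) (T : Ten m) (x : Fin m → ℝ) (a b c : Fin m) : ℝ :=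
  pd a (fun y => T y b c) x - (∑ d, Γ x d a b * T x d c) - (∑ d, Γ x d a c * T x b d)

/-- ∇_a T^{bc}. -/
def covD2U (Γ : Conn m) (T : Ten m) (x : Fin m → ℝ) (a b c : Fin m) : ℝ :=
  pd a (fun y => T y b c) x + (∑ d, Γ x b a d * T x d c) + (∑ d, Γ x c a d * T x b d)

/-- ∇_a S^b_c (first index of `S` upper, second lower). -/
def covD11 (Γ : Conn m) (S : Ten m) (x : Fin m → ℝ) (a b c : Fin m) : ℝ :=
  pd a (fun y => S y b c) x + (∑ d, Γ x b a d * S x d c) - (∑ d, Γ x d a c * S x b d)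

/-- ∇_a Q^{bcd}. -/
def covD3U (Γ : Conn m) (Q : Ten3 m) (x : Fin m → ℝ) (a b c d : Fin m) : ℝ :=
  pd a (fun y => Q y b c d) x + (∑ f, Γ x b a f * Q x f c d)
    + (∑ f, Γ x c a f * Q x b f d) + (∑ f, Γ x d a f * Q x b c f)

/-- Curvature `R^a_{bcd} = ∂_cΓ^a_{db} − ∂_dΓ^a_{cb} + Γ^a_{cf}Γ^f_{db} − Γ^a_{df}Γ^f_{cb}`. -/
def curv (Γ : Conn m) (x : Fin m → ℝ) (a b c d : Fin m) : ℝ :=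
  pd c (fun y => Γ y a d b) x - pd d (fun y => Γ y a c b) x
    + (∑ f, Γ x a c f * Γ x f d b) - (∑ f, Γ x a d f * Γ x f c b)

/-- `F_{ab} = ½(∂_aℓ_b − ∂_bℓ_a)`. -/
def Ff (ℓ : Vec m) (x : Fin m → ℝ) (a b : Fin m) : ℝ :=
  (pd a (fun y => ℓ y b) x - pd b (fun y => ℓ y a) x) / 2

/-- `U_{ab} = ½(n^c∂_cγ_{ab} + γ_{cb}∂_an^c + γ_{ac}∂_bn^c + ℓ_a∂_bn⁽²⁾ + ℓ_b∂_an⁽²⁾)`. -/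
def Uf (γ : Ten m) (ℓ : Vec m) (n : Vec m) (n2 : Sc m)
    (x : Fin m → ℝ) (a b : Fin m) : ℝ :=
  ((∑ c, (n x c * pd c (fun y => γ y a b) x + γ x c b * pd a (fun y => n y c) x
      + γ x a c * pd b (fun y => n y c) x))
    + ℓ x a * pd b n2 x + ℓ x b * pd a n2 x) / 2

/-- Metric hypersurface connection `Γ̊^c_{ab}`. -/
def Gam0 (γ : Ten m) (ℓ : Vec m) (P : Ten m) (n : Vec m)
    (x : Fin m → ℝ) (c a b : Fin m) : ℝ :=
  (∑ d, P x c d * (pd a (fun y => γ y b d) x + pd b (fun y => γ y a d) x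
      - pd d (fun y => γ y a b) x)) / 2
  + n x c * (pd a (fun y => ℓ y b) x + pd b (fun y => ℓ y a) x) / 2

/-- The connection `Γ̄^c_{ab} = Γ̊^c_{ab} − n^c Y_{ab}`. -/
def GamB (γ : Ten m) (ℓ : Vec m) (P : Ten m) (n : Vec m) (Y : Ten m)
    (x : Fin m → ℝ) (c a b : Fin m) : ℝ :=
  Gam0 γ ℓ P n x c a b - n x c * Y x a b

/-- `K_{ab} = n⁽²⁾Y_{ab} + U_{ab}`. -/
def Kf (γ : Ten m) (ℓ : Vec m) (n : Vec m) (n2 : Sc m) (Y : Ten m)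
    (x : Fin m → ℝ) (a b : Fin m) : ℝ :=
  n2 x * Y x a b + Uf γ ℓ n n2 x a b

/-- `φ_a = ½n⁽²⁾∂_aℓ⁽²⁾ + n^b(Y_{ab} + F_{ab})`. -/
def phif (ℓ : Vec m) (ℓ2 : Sc m) (n : Vec m) (n2 : Sc m) (Y : Ten m)
    (x : Fin m → ℝ) (a : Fin m) : ℝ :=
  n2 x * pd a ℓ2 x / 2 + ∑ b, n x b * (Y x a b + Ff ℓ x a b)

/-- `Ψ^b_a = P^{bc}(Y_{ac} + F_{ac}) + ½n^b∂_aℓ⁽²⁾`. -/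
def Psif (ℓ : Vec m) (ℓ2 : Sc m) (P : Ten m) (n : Vec m) (Y : Ten m)
    (x : Fin m → ℝ) (b a : Fin m) : ℝ :=
  (∑ c, P x b c * (Y x a c + Ff ℓ x a c)) + n x b * pd a ℓ2 x / 2

/-- Smoothness of a scalar field on `U`. -/
def SmSc (U : Set (Fin m → ℝ)) (f : Sc m) : Prop := ContDiffOn ℝ (⊤ : ℕ∞) f U
/-- Smoothness of a one-index field on `U`. -/
def SmVec (U : Set (Fin m → ℝ)) (f : Vec m) : Prop :=
  ∀ a, ContDiffOn ℝ (⊤ : ℕ∞) (fun x => f x a) U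
/-- Smoothness of a two-index field on `U`. -/
def SmTen (U : Set (Fin m → ℝ)) (f : Ten m) : Prop :=
  ∀ a b, ContDiffOn ℝ (⊤ : ℕ∞) (fun x => f x a b) U

/-- Smooth coordinate hypersurface metric data on `U`. -/
def MetricData (U : Set (Fin m → ℝ)) (γ : Ten m) (ℓ : Vec m) (ℓ2 : Sc m)
    (P : Ten m) (n : Vec m) (n2 : Sc m) : Prop :=
  SmTen U γ ∧ SmVec U ℓ ∧ SmSc U ℓ2 ∧ SmTen U P ∧ SmVec U n ∧ SmSc U n2 ∧
  (∀ x ∈ U, ∀ a b, γ x a b = γ x b a) ∧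
  (∀ x ∈ U, ∀ a b, P x a b = P x b a) ∧
  (∀ x ∈ U, InvBlocks (γ x) (ℓ x) (ℓ2 x) (P x) (n x) (n2 x))

/-- Gauge-transformed `ℓ`. -/
def gaugeL (γ : Ten m) (ℓ : Vec m) (u : Sc m) (V : Vec m) : Vec m :=
  fun x a => u x * (ℓ x a + ∑ b, V x b * γ x a b)

/-- Gauge-transformed `ℓ⁽²⁾`. -/
def gaugeL2 (γ : Ten m) (ℓ : Vec m) (ℓ2 : Sc m) (u : Sc m) (V : Vec m) : Sc m :=
  fun x => u x ^ 2 * (ℓ2 x + 2 * (∑ a, V x a * ℓ x a) + ∑ a, ∑ b, V x a * V x b * γ x a b)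

/-- Gauge-transformed `Y`. -/
def gaugeY (γ : Ten m) (ℓ : Vec m) (Y : Ten m) (u : Sc m) (V : Vec m) : Ten m :=
  fun x a b => u x * Y x a b + (ℓ x a * pd b u x + ℓ x b * pd a u x) / 2
    + ((u x * ∑ c, V x c * pd c (fun y => γ y a b) x)
      + (∑ c, γ x c b * pd a (fun y => u y * V y c) x)
      + (∑ c, γ x a c * pd b (fun y => u y * V y c) x)) / 2

/-- Gauge-transformed `P`. -/
def gaugeP (P : Ten m) (n : Vec m) (n2 : Sc m) (V : Vec m) : Ten m :=
  fun x a b => P x a b + n2 x * V x a * V x b - V x a * n x b - V x b * n x a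

/-- Gauge-transformed `n`. -/
def gaugeN (n : Vec m) (n2 : Sc m) (u : Sc m) (V : Vec m) : Vec m :=
  fun x a => (u x)⁻¹ * (n x a - n2 x * V x a)

/-- Gauge-transformed `n⁽²⁾`. -/
def gaugeN2 (n2 : Sc m) (u : Sc m) : Sc m :=
  fun x => ((u x) ^ 2)⁻¹ * n2 x

/-- Shell energy-momentum tensor `τ^{fa}` built pointwise from the jump `V_{ab}`. -/
def tauP (P : Fin m → Fin m → ℝ) (n : Fin m → ℝ) (n2 : ℝ) (V : Fin m → Fin m → ℝ)
    (f a : Fin m) : ℝ :=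
  (∑ c, ∑ d, (n f * P a c + n a * P f c) * n d * V c d)
  - (∑ c, ∑ d, (n2 * P f c * P a d + P f a * n c * n d) * V c d)
  + (n2 * P f a - n f * n a) * (∑ c, ∑ d, P c d * V c d)

/-- `τ^f_c = −(n⁽²⁾P^{bd} − n^bn^d)(δ^f_dV_{bc} − δ^f_cV_{bd})`. -/
def tauMixP (P : Fin m → Fin m → ℝ) (n : Fin m → ℝ) (n2 : ℝ)
    (V : Fin m → Fin m → ℝ) (f c : Fin m) : ℝ :=
  -(∑ b, ∑ d, (n2 * P b d - n b * n d) * (kd f d * V b c - kd f c * V b d))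

/-- `T^f = (P^{bf}n^c − P^{bc}n^f)V_{bc}`. -/
def tauVecP (P : Fin m → Fin m → ℝ) (n : Fin m → ℝ) (V : Fin m → Fin m → ℝ)
    (f : Fin m) : ℝ :=
  ∑ b, ∑ c, (P b f * n c - P b c * n f) * V b c

/-- The block matrix 𝔸. -/
def blockA (γ : Ten m) (ℓ : Vec m) (ℓ2 : Sc m) (x : Fin m → ℝ) :
    Matrix (Fin m ⊕ Unit) (Fin m ⊕ Unit) ℝ :=
  fun i j =>
    match i, j with
    | Sum.inl a, Sum.inl b => γ x a b
    | Sum.inl a, Sum.inr _ => ℓ x a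
    | Sum.inr _, Sum.inl b => ℓ x b
    | Sum.inr _, Sum.inr _ => ℓ2 x

/-- `det 𝔸` as a scalar field. -/
def detA (γ : Ten m) (ℓ : Vec m) (ℓ2 : Sc m) (x : Fin m → ℝ) : ℝ :=
  (blockA γ ℓ ℓ2 x).det

end HypData

section FiniteSums

variable {α β γ δ M : Type*} [Fintype α] [Fintype β] [Fintype γ] [Fintype δ] [AddCommMonoid M]

lemma sum_rotate₃ (f : α → β → γ → M) :
    ∑ a, ∑ b, ∑ c, f a b c = ∑ b, ∑ c, ∑ a, f a b c := by
  rw [Finset.sum_comm]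
  exact Finset.sum_congr rfl fun b _ => Finset.sum_comm

lemma sum_rotate₄ (f : α → β → γ → δ → M) :
    ∑ a, ∑ b, ∑ c, ∑ d, f a b c d = ∑ b, ∑ c, ∑ d, ∑ a, f a b c d := by
  rw [Finset.sum_comm]
  exact Finset.sum_congr rfl fun b _ => sum_rotate₃ _

lemma sum_sum_mul_eq_zero_of_symm_of_antisymm {ι : Type*} [Fintype ι] {M A : ι → ι → ℝ}
    (hM : ∀ i j, M i j = M j i) (hA : ∀ i j, A i j = -A j i) :
    ∑ i, ∑ j, M i j * A i j = 0 := by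
  have h : ∑ i, ∑ j, M i j * A i j = -∑ i, ∑ j, M i j * A i j := by
    conv_lhs => rw [Finset.sum_comm]
    rw [← Finset.sum_neg_distrib]
    refine Finset.sum_congr rfl fun i _ => ?_
    rw [← Finset.sum_neg_distrib]
    exact Finset.sum_congr rfl fun j _ => by rw [hM j i, hA j i]; ring
  linarith

end FiniteSums

namespace HypData

open scoped ContDiff

variable {m : ℕ}

section PartialDerivatives

variable {f g : Sc m} {x : Fin m → ℝ}

lemma pd_congr_of_eventuallyEq (h : f =ᶠ[nhds x] g) (a : Fin m) : pd a f x = pd a g x := by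
  rw [pd, h.fderiv_eq, pd]

lemma pd_add (hf : DifferentiableAt ℝ f x) (hg : DifferentiableAt ℝ g x) (a : Fin m) :
    pd a (fun y => f y + g y) x = pd a f x + pd a g x := by
  simp [pd, fderiv_fun_add hf hg]

lemma pd_mul (hf : DifferentiableAt ℝ f x) (hg : DifferentiableAt ℝ g x) (a : Fin m) :
    pd a (fun y => f y * g y) x = f x * pd a g x + g x * pd a f x := by
  simp [pd, fderiv_fun_mul hf hg]

lemma pd_sum {ι : Type*} {s : Finset ι} {f : ι → Sc m}
    (hf : ∀ i ∈ s, DifferentiableAt ℝ (f i) x) (a : Fin m) :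
    pd a (fun y => ∑ i ∈ s, f i y) x = ∑ i ∈ s, pd a (f i) x := by
  simp [pd, fderiv_fun_sum hf]

lemma differentiableAt_pd (hf : ContDiffAt ℝ ∞ f x) (a : Fin m) :
    DifferentiableAt ℝ (fun y => pd a f y) x :=
  ((hf.fderiv_right (m := ∞) le_rfl).clm_apply contDiffAt_const).differentiableAt (by simp)

end PartialDerivatives

section InverseBlocks

variable {P : Fin m → Fin m → ℝ} {ℓ n : Fin m → ℝ} {ℓ2 : ℝ}

lemma sum_sum_mul_mul_eq_of_inverse (hP : ∀ a b, P a b = P b a)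
    (hPℓ : ∀ a, (∑ b, P a b * ℓ b) + ℓ2 * n a = 0) (B : Fin m → ℝ) :
    ∑ e, (∑ d, P e d * B d) * ℓ e = -(ℓ2 * ∑ d, n d * B d) := by
  have h : ∀ d, ∑ e, P e d * ℓ e = -(ℓ2 * n d) := fun d => by
    rw [eq_neg_iff_add_eq_zero, ← hPℓ d]
    simp only [hP d]
  calc ∑ e, (∑ d, P e d * B d) * ℓ e = ∑ d, (∑ e, P e d * ℓ e) * B d := by
        simp only [Finset.sum_mul]
        rw [Finset.sum_comm]
        exact Finset.sum_congr rfl fun d _ => Finset.sum_congr rfl fun e _ => by ring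
    _ = -(ℓ2 * ∑ d, n d * B d) := by
        simp only [h, Finset.mul_sum, ← Finset.sum_neg_distrib, neg_mul, mul_assoc]

end InverseBlocks

variable {U : Set (Fin m → ℝ)} {γ : Ten m} {ℓ : Vec m} {ℓ2 : Sc m} {P : Ten m} {n : Vec m}
  {n2 : Sc m} {Y : Ten m} {x : Fin m → ℝ}

lemma Kf_symm (hU : IsOpen U) (hγ : ∀ y ∈ U, ∀ a b, γ y a b = γ y b a)
    (hY : ∀ a b, Y x a b = Y x b a) (hx : x ∈ U) (a b : Fin m) :
    Kf γ ℓ n n2 Y x a b = Kf γ ℓ n n2 Y x b a := by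
  have hpd : ∀ e, pd e (fun y => γ y a b) x = pd e (fun y => γ y b a) x := fun e =>
    pd_congr_of_eventuallyEq (Filter.eventually_of_mem (hU.mem_nhds hx) fun y hy => hγ y hy a b) e
  have hsum : ∑ e, (n x e * pd e (fun y => γ y a b) x + γ x e b * pd a (fun y => n y e) x
        + γ x a e * pd b (fun y => n y e) x)
      = ∑ e, (n x e * pd e (fun y => γ y b a) x + γ x e a * pd b (fun y => n y e) x
        + γ x b e * pd a (fun y => n y e) x) :=
    Finset.sum_congr rfl fun e _ => by rw [hpd, hγ x hx e b, hγ x hx a e]; ring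
  simp only [Kf, Uf, hY a b, hsum]
  ring

/-- `∂_c` of the inverse relation `γ_{ad}n^d + n⁽²⁾ℓ_a = 0`. -/
lemma pd_inverse_relation (hU : IsOpen U) (hdata : MetricData U γ ℓ ℓ2 P n n2) (hx : x ∈ U)
    (a c : Fin m) :
    (∑ d, γ x a d * pd c (fun y => n y d) x) + (∑ d, n x d * pd c (fun y => γ y a d) x)
      + n2 x * pd c (fun y => ℓ y a) x + ℓ x a * pd c n2 x = 0 := by
  obtain ⟨hγ, hℓ, -, -, hn, hn2, -, -, hinv⟩ := hdata
  have hd := fun {f : Sc m} (hf : ContDiffOn ℝ (⊤ : ℕ∞) f U) =>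
    (hf.differentiableOn (by simp)).differentiableAt (hU.mem_nhds hx)
  have hγn : ∀ d ∈ Finset.univ, DifferentiableAt ℝ (fun y => γ y a d * n y d) x :=
    fun d _ => (hd (hγ a d)).fun_mul (hd (hn d))
  have h0 : pd c (fun y => (∑ d, γ y a d * n y d) + n2 y * ℓ y a) x = 0 := by
    rw [pd_congr_of_eventuallyEq (g := fun _ => 0)
      (Filter.eventually_of_mem (hU.mem_nhds hx) fun y hy => (hinv y hy).2.2.2 a)]
    simp [pd]
  rw [pd_add (DifferentiableAt.fun_sum hγn) ((hd hn2).fun_mul (hd (hℓ a))), pd_sum hγn,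
    pd_mul (hd hn2) (hd (hℓ a))] at h0
  simp only [pd_mul (hd (hγ a _)) (hd (hn _)), Finset.sum_add_distrib] at h0
  linarith

lemma sum_GamB_mul_ℓ (hP : ∀ a b, P x a b = P x b a)
    (hinv : InvBlocks (γ x) (ℓ x) (ℓ2 x) (P x) (n x) (n2 x)) (c a : Fin m) :
    ∑ e, GamB γ ℓ P n Y x e c a * ℓ x e
      = -(ℓ2 x * ∑ d, n x d * (pd c (fun y => γ y a d) x + pd a (fun y => γ y c d) x
          - pd d (fun y => γ y c a) x)) / 2
        + (1 - n2 x * ℓ2 x) * ((pd c (fun y => ℓ y a) x + pd a (fun y => ℓ y c) x) / 2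
          - Y x c a) := by
  obtain ⟨-, hPℓ, hnℓ, -⟩ := hinv
  calc ∑ e, GamB γ ℓ P n Y x e c a * ℓ x e
      = ∑ e, ((∑ d, P x e d * (pd c (fun y => γ y a d) x + pd a (fun y => γ y c d) x
            - pd d (fun y => γ y c a) x)) * ℓ x e / 2
          + n x e * ℓ x e * ((pd c (fun y => ℓ y a) x + pd a (fun y => ℓ y c) x) / 2
            - Y x c a)) :=
        Finset.sum_congr rfl fun e _ => by simp only [GamB, Gam0]; ring
    _ = _ := by
        rw [Finset.sum_add_distrib, ← Finset.sum_div, ← Finset.sum_mul,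
          sum_sum_mul_mul_eq_of_inverse hP hPℓ, show ∑ e, n x e * ℓ x e = 1 - n2 x * ℓ2 x by
            linarith]

lemma covD1_ℓ_add_ℓ2_mul_Kf (hU : IsOpen U) (hdata : MetricData U γ ℓ ℓ2 P n n2) (hx : x ∈ U)
    (c a : Fin m) :
    covD1 (GamB γ ℓ P n Y) ℓ x c a + ℓ2 x * Kf γ ℓ n n2 Y x c a = Y x c a + Ff ℓ x c a := by
  have hac := pd_inverse_relation hU hdata hx a c
  have hca := pd_inverse_relation hU hdata hx c a
  obtain ⟨-, -, -, -, -, -, hγ, hP, hinv⟩ := hdata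
  have hUsum : ∑ e, (n x e * pd e (fun y => γ y c a) x + γ x e a * pd c (fun y => n y e) x
        + γ x c e * pd a (fun y => n y e) x)
      = (∑ d, n x d * pd d (fun y => γ y c a) x) + (∑ d, γ x a d * pd c (fun y => n y d) x)
        + ∑ d, γ x c d * pd a (fun y => n y d) x := by
    simp only [← Finset.sum_add_distrib, hγ x hx _ a]
  rw [covD1, sum_GamB_mul_ℓ (hP x hx) (hinv x hx), Kf, Uf, hUsum, Ff]
  simp only [mul_add, mul_sub, Finset.sum_add_distrib, Finset.sum_sub_distrib]
  linear_combination (ℓ2 x / 2) * (hac + hca)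

lemma differentiableAt_Kf (hU : IsOpen U) (hdata : MetricData U γ ℓ ℓ2 P n n2)
    (hY : SmTen U Y) (hx : x ∈ U) (b c : Fin m) :
    DifferentiableAt ℝ (fun y => Kf γ ℓ n n2 Y y b c) x := by
  obtain ⟨hγ, hℓ, -, -, hn, hn2, -⟩ := hdata
  have hd := fun {f : Sc m} (hf : ContDiffOn ℝ (⊤ : ℕ∞) f U) =>
    (hf.differentiableOn (by simp)).differentiableAt (hU.mem_nhds hx)
  have hdpd := fun {f : Sc m} (hf : ContDiffOn ℝ (⊤ : ℕ∞) f U) (a : Fin m) =>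
    differentiableAt_pd (hf.contDiffAt (hU.mem_nhds hx)) a
  simp only [Kf, Uf, div_eq_mul_inv]
  refine ((hd hn2).fun_mul (hd (hY b c))).fun_add
    ((((DifferentiableAt.fun_sum fun e _ => ?_).fun_add ?_).fun_add ?_).mul_const _)
  · exact (((hd (hn e)).fun_mul (hdpd (hγ b c) e)).fun_add
      ((hd (hγ e c)).fun_mul (hdpd (hn e) b))).fun_add ((hd (hγ b e)).fun_mul (hdpd (hn e) c))
  · exact (hd (hℓ b)).fun_mul (hdpd hn2 c)
  · exact (hd (hℓ c)).fun_mul (hdpd hn2 b)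

lemma covD2_ℓ2_mul_Kf (hU : IsOpen U) (hdata : MetricData U γ ℓ ℓ2 P n n2)
    (hY : SmTen U Y) (hx : x ∈ U) (d b c : Fin m) :
    covD2 (GamB γ ℓ P n Y) (fun y b' c' => ℓ2 y * Kf γ ℓ n n2 Y y b' c') x d b c
      = ℓ2 x * covD2 (GamB γ ℓ P n Y) (Kf γ ℓ n n2 Y) x d b c
        + Kf γ ℓ n n2 Y x b c * pd d ℓ2 x := by
  have hℓ2 : DifferentiableAt ℝ ℓ2 x :=
    (hdata.2.2.1.differentiableOn (by simp)).differentiableAt (hU.mem_nhds hx)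
  simp only [covD2, pd_mul hℓ2 (differentiableAt_Kf hU hdata hY hx b c), mul_left_comm _ (ℓ2 x),
    ← Finset.mul_sum]
  ring

lemma Ff_antisymm (a b : Fin m) : Ff ℓ x a b = -Ff ℓ x b a := by
  simp only [Ff]
  ring

end HypData

namespace GaussCodazzi

open HypData

variable {m : ℕ}

/-- The Gauss-Codazzi quantity `(I)_{bcd}` (= `R(ℓ,e_b,e_c,e_d)` for embedded data). -/
def Idef (γ : Ten m) (ℓ : Vec m) (ℓ2 : Sc m) (P : Ten m) (n : Vec m) (n2 : Sc m)
    (Y : Ten m) (x : Fin m → ℝ) (b c d : Fin m) : ℝ :=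
  (∑ a, ℓ x a * curv (GamB γ ℓ P n Y) x a b c d)
  + ℓ2 x * (covD2 (GamB γ ℓ P n Y) (Kf γ ℓ n n2 Y) x d b c
      - covD2 (GamB γ ℓ P n Y) (Kf γ ℓ n n2 Y) x c b d)
  + Kf γ ℓ n n2 Y x b c * pd d ℓ2 x / 2
  - Kf γ ℓ n n2 Y x b d * pd c ℓ2 x / 2

/-- The Gauss-Codazzi quantity `(II)_{abcd}` (= `R(e_a,e_b,e_c,e_d)` for embedded data). -/
def IIdef (γ : Ten m) (ℓ : Vec m) (ℓ2 : Sc m) (P : Ten m) (n : Vec m) (n2 : Sc m)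
    (Y : Ten m) (x : Fin m → ℝ) (a b c d : Fin m) : ℝ :=
  (∑ f, γ x a f * curv (GamB γ ℓ P n Y) x f b c d)
  - Kf γ ℓ n n2 Y x b d * (covD1 (GamB γ ℓ P n Y) ℓ x c a
      + ℓ2 x * Kf γ ℓ n n2 Y x c a)
  + Kf γ ℓ n n2 Y x b c * (covD1 (GamB γ ℓ P n Y) ℓ x d a
      + ℓ2 x * Kf γ ℓ n n2 Y x d a)
  - ℓ x a * (covD2 (GamB γ ℓ P n Y) (Kf γ ℓ n n2 Y) x c b d
      - covD2 (GamB γ ℓ P n Y) (Kf γ ℓ n n2 Y) x d b c)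

/- Pointwise forms of `Idef` and `IIdef`: `R`, `DK` and `dℓ2` stand for `R̄`, `∇̄K` and `∂ℓ⁽²⁾` at a
point, and `W_{ca}` for `∇̄_cℓ_a + ℓ⁽²⁾K_{ca}`. -/

def gaussI (ℓ : Fin m → ℝ) (ℓ2 : ℝ) (K : Fin m → Fin m → ℝ) (dℓ2 : Fin m → ℝ)
    (R : Fin m → Fin m → Fin m → Fin m → ℝ) (DK : Fin m → Fin m → Fin m → ℝ)
    (b c d : Fin m) : ℝ :=
  (∑ a, ℓ a * R a b c d) + ℓ2 * (DK d b c - DK c b d) + K b c * dℓ2 d / 2 - K b d * dℓ2 c / 2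

def gaussII (γ K W : Fin m → Fin m → ℝ) (ℓ : Fin m → ℝ)
    (R : Fin m → Fin m → Fin m → Fin m → ℝ) (DK : Fin m → Fin m → Fin m → ℝ)
    (a b c d : Fin m) : ℝ :=
  (∑ f, γ a f * R f b c d) - K b d * W c a + K b c * W d a - ℓ a * (DK c b d - DK d b c)

section PointwiseAlgebra

variable {P γ K W : Fin m → Fin m → ℝ} {ℓ n dℓ2 : Fin m → ℝ} {ℓ2 n2 : ℝ}
  {R : Fin m → Fin m → Fin m → Fin m → ℝ} {DK : Fin m → Fin m → Fin m → ℝ}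

lemma sum_gaussII_mul (X : Fin m → ℝ) (b c d : Fin m) :
    ∑ a, gaussII γ K W ℓ R DK a b c d * X a
      = (∑ f, (∑ a, X a * γ a f) * R f b c d) - K b d * (∑ a, X a * W c a)
        + K b c * (∑ a, X a * W d a) - (∑ a, X a * ℓ a) * (DK c b d - DK d b c) := by
  have hγR : ∑ f, (∑ a, X a * γ a f) * R f b c d = ∑ a, (∑ f, γ a f * R f b c d) * X a := by
    simp only [Finset.sum_mul]
    rw [Finset.sum_comm]
    exact Finset.sum_congr rfl fun a _ => Finset.sum_congr rfl fun f _ => by ring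
  rw [hγR, Finset.sum_mul _ (fun a => X a * ℓ a)]
  simp only [gaussII, Finset.mul_sum, ← Finset.sum_sub_distrib, ← Finset.sum_add_distrib]
  exact Finset.sum_congr rfl fun a _ => by ring

theorem normal_tangential_constraint (hγ : ∀ a b, γ a b = γ b a)
    (hnℓ : (∑ a, n a * ℓ a) + n2 * ℓ2 = 1) (hγn : ∀ a, (∑ b, γ a b * n b) + n2 * ℓ a = 0)
    (c : Fin m) :
    (∑ b, ∑ d, gaussI ℓ ℓ2 K dℓ2 R DK b c d * (n2 * P b d - n b * n d))
      + (∑ a, ∑ b, ∑ d, gaussII γ K W ℓ R DK a b c d * n a * P b d)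
    = (∑ b, ∑ d, (P b d - ℓ2 * n b * n d) * (DK d b c - DK c b d))
      + (∑ b, ∑ d, (n2 * P b d - n b * n d) * (K b c * dℓ2 d - K b d * dℓ2 c)) / 2
      + (∑ a, ∑ b, ∑ d, P b d * n a * (K b c * W d a - K b d * W c a))
      - (∑ a, ∑ b, ∑ d, n b * n d * ℓ a * R a b c d) := by
  have hnγ : ∀ f, ∑ a, n a * γ a f = -(n2 * ℓ f) := fun f => by
    rw [← sub_eq_zero, sub_neg_eq_add, ← hγn f]
    simp only [hγ f, mul_comm (n _)]
  have hnII : ∀ b d, ∑ a, gaussII γ K W ℓ R DK a b c d * n a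
      = -(n2 * ∑ f, ℓ f * R f b c d) - K b d * (∑ a, n a * W c a)
        + K b c * (∑ a, n a * W d a) - (1 - n2 * ℓ2) * (DK c b d - DK d b c) := by
    intro b d
    rw [sum_gaussII_mul, show ∑ a, n a * ℓ a = 1 - n2 * ℓ2 by linarith]
    simp only [hnγ, neg_mul, mul_assoc, Finset.sum_neg_distrib, ← Finset.mul_sum]
  rw [sum_rotate₃ (fun a b d => gaussII γ K W ℓ R DK a b c d * n a * P b d),
    sum_rotate₃ (fun a b d => P b d * n a * (K b c * W d a - K b d * W c a)),
    sum_rotate₃ (fun a b d => n b * n d * ℓ a * R a b c d)]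
  simp only [← Finset.sum_add_distrib, ← Finset.sum_sub_distrib, Finset.sum_div]
  refine Finset.sum_congr rfl fun b _ => Finset.sum_congr rfl fun d _ => ?_
  have hW : ∑ a, P b d * n a * (K b c * W d a - K b d * W c a)
      = P b d * (K b c * ∑ a, n a * W d a - K b d * ∑ a, n a * W c a) := by
    simp only [Finset.mul_sum, ← Finset.sum_sub_distrib]
    exact Finset.sum_congr rfl fun a _ => by ring
  have hR : ∑ a, n b * n d * ℓ a * R a b c d = n b * n d * ∑ a, ℓ a * R a b c d := by
    simp only [Finset.mul_sum, mul_assoc]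
  rw [← Finset.sum_mul, hnII, hW, hR, gaussI]
  ring

lemma gaussII_add (W' : Fin m → Fin m → ℝ) (a b c d : Fin m) :
    gaussII γ K (fun c a => W c a + W' c a) ℓ R DK a b c d
      = gaussII γ K W ℓ R DK a b c d + (K b c * W' d a - K b d * W' c a) := by
  simp only [gaussII]
  ring

lemma sum_antisymm_part_eq_zero (hP : ∀ a b, P a b = P b a) (hK : ∀ a b, K a b = K b a)
    {F : Fin m → Fin m → ℝ} (hF : ∀ a b, F a b = -F b a) :
    ∑ a, ∑ b, ∑ c, ∑ d, (K b c * F d a - K b d * F c a) * P a c * P b d = 0 := by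
  have hPF : ∑ a, ∑ c, P a c * F c a = 0 :=
    sum_sum_mul_eq_zero_of_symm_of_antisymm hP fun a c => hF c a
  have hPKPF : ∑ a, ∑ d, (∑ b, ∑ c, P a c * K b c * P b d) * F d a = 0 := by
    refine sum_sum_mul_eq_zero_of_symm_of_antisymm (fun a d => ?_) fun a d => hF d a
    rw [Finset.sum_comm]
    exact Finset.sum_congr rfl fun c _ => Finset.sum_congr rfl fun b _ => by
      rw [hP d b, hP c a, hK c b]; ring
  have h1 : ∑ a, ∑ b, ∑ c, ∑ d, K b c * F d a * P a c * P b d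
      = ∑ a, ∑ d, (∑ b, ∑ c, P a c * K b c * P b d) * F d a := by
    refine Finset.sum_congr rfl fun a _ => ?_
    rw [← sum_rotate₃]
    simp only [Finset.sum_mul]
    exact Finset.sum_congr rfl fun d _ => Finset.sum_congr rfl fun b _ =>
      Finset.sum_congr rfl fun c _ => by ring
  have h2 : ∑ a, ∑ b, ∑ c, ∑ d, K b d * F c a * P a c * P b d
      = ∑ a, ∑ c, P a c * F c a * ∑ b, ∑ d, K b d * P b d := by
    refine Finset.sum_congr rfl fun a _ => ?_
    conv_lhs => rw [Finset.sum_comm]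
    simp only [Finset.mul_sum]
    exact Finset.sum_congr rfl fun c _ => Finset.sum_congr rfl fun b _ =>
      Finset.sum_congr rfl fun d _ => by ring
  simp only [sub_mul, Finset.sum_sub_distrib]
  rw [h1, h2, hPKPF]
  simp only [← Finset.sum_mul, hPF, zero_mul, sub_zero]

theorem normal_transversal_constraint {Y F : Fin m → Fin m → ℝ} (hP : ∀ a b, P a b = P b a)
    (hK : ∀ a b, K a b = K b a) (hY : ∀ a b, Y a b = Y b a) (hF : ∀ a b, F a b = -F b a)
    (hPγ : ∀ a b, (∑ c, P a c * γ c b) + n a * ℓ b = kd a b)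
    (hPℓ : ∀ a, (∑ b, P a b * ℓ b) + ℓ2 * n a = 0) :
    -2 * (∑ b, ∑ c, ∑ d, gaussI ℓ ℓ2 K dℓ2 R DK b c d * P b d * n c)
      - (∑ a, ∑ b, ∑ c, ∑ d,
          gaussII γ K (fun c a => Y c a + F c a) ℓ R DK a b c d * P a c * P b d)
    = -(∑ b, ∑ c, ∑ d, P b d * R c b c d)
      - (∑ b, ∑ c, ∑ d, P b d * n c * ((∑ a, ℓ a * R a b c d)
          + (ℓ2 * DK d b c + K b c * dℓ2 d) - (ℓ2 * DK c b d + K b d * dℓ2 c)))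
      - (∑ a, ∑ b, ∑ c, ∑ d, P a c * P b d * (K b c * Y d a - K b d * Y a c)) := by
  have hPγ' : ∀ c f, ∑ a, P a c * γ a f = kd c f - n c * ℓ f := fun c f => by
    rw [eq_sub_iff_add_eq, ← hPγ c f]
    simp only [hP c]
  have hPℓ' : ∀ c, ∑ a, P a c * ℓ a = -(ℓ2 * n c) := fun c => by
    rw [eq_neg_iff_add_eq_zero, ← hPℓ c]
    simp only [hP c]
  have hPII : ∀ b c d, ∑ a, gaussII γ K Y ℓ R DK a b c d * P a c
      = R c b c d - n c * (∑ f, ℓ f * R f b c d) - K b d * (∑ a, P a c * Y c a)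
        + K b c * (∑ a, P a c * Y d a) + ℓ2 * n c * (DK c b d - DK d b c) := by
    intro b c d
    rw [sum_gaussII_mul, hPℓ']
    simp only [hPγ', sub_mul, Finset.sum_sub_distrib, kd, ite_mul, one_mul, zero_mul,
      Finset.sum_ite_eq, Finset.mem_univ, if_true, mul_assoc, ← Finset.mul_sum]
    ring
  simp only [gaussII_add, add_mul, Finset.sum_add_distrib, sum_antisymm_part_eq_zero hP hK hF,
    add_zero]
  conv_lhs => rw [sum_rotate₄]
  conv_rhs => rw [sum_rotate₄]
  simp only [← Finset.sum_sub_distrib, Finset.mul_sum, ← Finset.sum_neg_distrib]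
  refine Finset.sum_congr rfl fun b _ => Finset.sum_congr rfl fun c _ =>
    Finset.sum_congr rfl fun d _ => ?_
  have hPY : ∑ a, P a c * P b d * (K b c * Y d a - K b d * Y a c)
      = P b d * (K b c * ∑ a, P a c * Y d a - K b d * ∑ a, P a c * Y c a) := by
    simp only [Finset.mul_sum, ← Finset.sum_sub_distrib]
    exact Finset.sum_congr rfl fun a _ => by rw [hY a c]; ring
  rw [← Finset.sum_mul, hPII, hPY, gaussI]
  ring

end PointwiseAlgebra

lemma Idef_eq_gaussI {γ : Ten m} {ℓ : Vec m} {ℓ2 : Sc m} {P : Ten m} {n : Vec m} {n2 : Sc m}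
    {Y : Ten m} (x : Fin m → ℝ) (b c d : Fin m) :
    Idef γ ℓ ℓ2 P n n2 Y x b c d
      = gaussI (ℓ x) (ℓ2 x) (Kf γ ℓ n n2 Y x) (fun e => pd e ℓ2 x) (curv (GamB γ ℓ P n Y) x)
          (covD2 (GamB γ ℓ P n Y) (Kf γ ℓ n n2 Y) x) b c d :=
  rfl

lemma IIdef_eq_gaussII {U : Set (Fin m → ℝ)} {γ : Ten m} {ℓ : Vec m} {ℓ2 : Sc m} {P : Ten m}
    {n : Vec m} {n2 : Sc m} {Y : Ten m} {x : Fin m → ℝ} (hU : IsOpen U)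
    (hdata : MetricData U γ ℓ ℓ2 P n n2) (hx : x ∈ U) (a b c d : Fin m) :
    IIdef γ ℓ ℓ2 P n n2 Y x a b c d
      = gaussII (γ x) (Kf γ ℓ n n2 Y x) (fun c a => Y x c a + Ff ℓ x c a) (ℓ x)
          (curv (GamB γ ℓ P n Y) x) (covD2 (GamB γ ℓ P n Y) (Kf γ ℓ n n2 Y) x) a b c d := by
  simp only [IIdef, gaussII, covD1_ℓ_add_ℓ2_mul_Kf hU hdata hx]

theorem statement14_general (m : ℕ) (U : Set (Fin m → ℝ)) (hU : IsOpen U)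
    (γ : Ten m) (ℓ : Vec m) (ℓ2 : Sc m) (P : Ten m) (n : Vec m) (n2 : Sc m)
    (hdata : MetricData U γ ℓ ℓ2 P n n2)
    (Y : Ten m) (hYsm : SmTen U Y) (hYs : ∀ x ∈ U, ∀ a b, Y x a b = Y x b a) :
    -- (1): the normal-transversal constraint (2 G(n,ℓ) for embedded data)
    ((∀ x ∈ U,
      -2 * (∑ b, ∑ c, ∑ d, Idef γ ℓ ℓ2 P n n2 Y x b c d * P x b d * n x c)
        - (∑ a, ∑ b, ∑ c, ∑ d,
            IIdef γ ℓ ℓ2 P n n2 Y x a b c d * P x a c * P x b d)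
      = -(∑ b, ∑ c, ∑ d, P x b d * curv (GamB γ ℓ P n Y) x c b c d)
        - (∑ b, ∑ c, ∑ d, P x b d * n x c
            * ((∑ a, ℓ x a * curv (GamB γ ℓ P n Y) x a b c d)
              + covD2 (GamB γ ℓ P n Y)
                  (fun y b' c' => ℓ2 y * Kf γ ℓ n n2 Y y b' c') x d b c
              - covD2 (GamB γ ℓ P n Y)
                  (fun y b' c' => ℓ2 y * Kf γ ℓ n n2 Y y b' c') x c b d))
        - (∑ a, ∑ b, ∑ c, ∑ d, P x a c * P x b d
            * (Kf γ ℓ n n2 Y x b c * Y x d a - Kf γ ℓ n n2 Y x b d * Y x a c)))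
    -- (2): the normal-tangential constraint (−G(n,e_c) for embedded data)
    ∧ (∀ x ∈ U, ∀ c,
      (∑ b, ∑ d, Idef γ ℓ ℓ2 P n n2 Y x b c d
          * (n2 x * P x b d - n x b * n x d))
        + (∑ a, ∑ b, ∑ d, IIdef γ ℓ ℓ2 P n n2 Y x a b c d * n x a * P x b d)
      = (∑ b, ∑ d, (P x b d - ℓ2 x * n x b * n x d)
          * (covD2 (GamB γ ℓ P n Y) (Kf γ ℓ n n2 Y) x d b c
            - covD2 (GamB γ ℓ P n Y) (Kf γ ℓ n n2 Y) x c b d))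
        + (∑ b, ∑ d, (n2 x * P x b d - n x b * n x d)
            * (Kf γ ℓ n n2 Y x b c * pd d ℓ2 x
              - Kf γ ℓ n n2 Y x b d * pd c ℓ2 x)) / 2
        + (∑ a, ∑ b, ∑ d, P x b d * n x a
            * (Kf γ ℓ n n2 Y x b c * (Y x d a + Ff ℓ x d a)
              - Kf γ ℓ n n2 Y x b d * (Y x c a + Ff ℓ x c a)))
        - (∑ a, ∑ b, ∑ d, n x b * n x d * ℓ x a
            * curv (GamB γ ℓ P n Y) x a b c d))) := by
  obtain ⟨-, -, -, -, -, -, hγ, hP, hinv⟩ := id hdata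
  refine ⟨fun x hx => ?_, fun x hx c => ?_⟩
  · obtain ⟨hPγ, hPℓ, -, -⟩ := hinv x hx
    simp only [Idef_eq_gaussI, IIdef_eq_gaussII hU hdata hx, covD2_ℓ2_mul_Kf hU hdata hYsm hx]
    exact normal_transversal_constraint (hP x hx) (Kf_symm hU hγ (hYs x hx) hx) (hYs x hx)
      Ff_antisymm hPγ hPℓ
  · obtain ⟨-, -, hnℓ, hγn⟩ := hinv x hx
    simp only [Idef_eq_gaussI, IIdef_eq_gaussII hU hdata hx]
    exact normal_tangential_constraint (hγ x hx) hnℓ hγn c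

/-- Theorem 1 of the paper, the constraint equations for a general
hypersurface written in terms of the connection `Γ̄`. -/
theorem statement14 (m : ℕ) (hm : 1 ≤ m) (U : Set (Fin m → ℝ)) (hU : IsOpen U)
    (γ : Ten m) (ℓ : Vec m) (ℓ2 : Sc m) (P : Ten m) (n : Vec m) (n2 : Sc m)
    (hdata : MetricData U γ ℓ ℓ2 P n n2)
    (Y : Ten m) (hYsm : SmTen U Y) (hYs : ∀ x ∈ U, ∀ a b, Y x a b = Y x b a) :
    -- (1): the normal-transversal constraint (2 G(n,ℓ) for embedded data)
    ((∀ x ∈ U,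
      -2 * (∑ b, ∑ c, ∑ d, Idef γ ℓ ℓ2 P n n2 Y x b c d * P x b d * n x c)
        - (∑ a, ∑ b, ∑ c, ∑ d,
            IIdef γ ℓ ℓ2 P n n2 Y x a b c d * P x a c * P x b d)
      = -(∑ b, ∑ c, ∑ d, P x b d * curv (GamB γ ℓ P n Y) x c b c d)
        - (∑ b, ∑ c, ∑ d, P x b d * n x c
            * ((∑ a, ℓ x a * curv (GamB γ ℓ P n Y) x a b c d)
              + covD2 (GamB γ ℓ P n Y)
                  (fun y b' c' => ℓ2 y * Kf γ ℓ n n2 Y y b' c') x d b c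
              - covD2 (GamB γ ℓ P n Y)
                  (fun y b' c' => ℓ2 y * Kf γ ℓ n n2 Y y b' c') x c b d))
        - (∑ a, ∑ b, ∑ c, ∑ d, P x a c * P x b d
            * (Kf γ ℓ n n2 Y x b c * Y x d a - Kf γ ℓ n n2 Y x b d * Y x a c)))
    -- (2): the normal-tangential constraint (−G(n,e_c) for embedded data)
    ∧ (∀ x ∈ U, ∀ c,
      (∑ b, ∑ d, Idef γ ℓ ℓ2 P n n2 Y x b c d
          * (n2 x * P x b d - n x b * n x d))
        + (∑ a, ∑ b, ∑ d, IIdef γ ℓ ℓ2 P n n2 Y x a b c d * n x a * P x b d)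
      = (∑ b, ∑ d, (P x b d - ℓ2 x * n x b * n x d)
          * (covD2 (GamB γ ℓ P n Y) (Kf γ ℓ n n2 Y) x d b c
            - covD2 (GamB γ ℓ P n Y) (Kf γ ℓ n n2 Y) x c b d))
        + (∑ b, ∑ d, (n2 x * P x b d - n x b * n x d)
            * (Kf γ ℓ n n2 Y x b c * pd d ℓ2 x
              - Kf γ ℓ n n2 Y x b d * pd c ℓ2 x)) / 2
        + (∑ a, ∑ b, ∑ d, P x b d * n x a
            * (Kf γ ℓ n n2 Y x b c * (Y x d a + Ff ℓ x d a)
              - Kf γ ℓ n n2 Y x b d * (Y x c a + Ff ℓ x c a)))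
        - (∑ a, ∑ b, ∑ d, n x b * n x d * ℓ x a
            * curv (GamB γ ℓ P n Y) x a b c d))) :=
  statement14_general m U hU γ ℓ ℓ2 P n n2 hdata Y hYsm hYs

end GaussCodazzi
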